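/- arXiv:1210.0042 — 2 statements merged into one kernel-verified Lean document; each statement's English description precedes it below -/
import Mathlib

section
/- For an odd prime p and n ≥ 0, the rational number ((-1)^n·p^n + p - 1)/p has order exactly n under χ. -/
/-- The quasi-quadratic map χ(x) = x·⌈x⌉. -/
def chi (x : ℚ) : ℚ := x * (⌈x⌉ : ℚ)

/-- `ordEq x n` says the order of `x` under `chi` is exactly `n`:
`chi^[n] x` is an integer but no earlier iterate is. -/
def ordEq (x : ℚ) (n : ℕ) : Prop :=
  (chi^[n] x).den = 1 ∧ ∀ j < n, (chi^[j] x).den ≠ 1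

lemma den_sub (p : ℕ) (hp : p.Prime) (c : ℤ) : (((c : ℚ)) - 1 / p).den = p := by
  have hpQ : (p : ℚ) ≠ 0 := by exact_mod_cast hp.pos.ne'
  have hx : ((c : ℚ)) - 1 / p = ((c * p - 1 : ℤ) : ℚ) / ((p : ℤ) : ℚ) := by
    push_cast
    field_simp
  have hnd : ¬ ((p : ℤ) ∣ (c * p - 1)) := by
    intro h
    have h1 : (p : ℤ) ∣ 1 := by
      have := (Dvd.dvd.sub (⟨c, by ring⟩ : (p : ℤ) ∣ c * p) h)
      simpa using this
    have := Int.le_of_dvd one_pos h1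
    have := hp.one_lt
    omega
  have hnd' : ¬ (p ∣ (c * p - 1).natAbs) := by
    intro h
    exact hnd (Int.dvd_natAbs.mp (Int.natCast_dvd_natCast.mpr h))
  have hcop : Nat.Coprime (c * p - 1).natAbs ((p : ℤ)).natAbs := by
    rw [Int.natAbs_natCast]
    exact (hp.coprime_iff_not_dvd.mpr hnd').symm
  have := Rat.den_div_eq_of_coprime (a := c * p - 1) (b := (p : ℤ))
    (by exact_mod_cast hp.pos) hcop
  rw [hx]
  exact_mod_cast this

lemma ceil_sub (p : ℕ) (hp : p.Prime) (c : ℤ) : ⌈((c : ℚ)) - 1 / p⌉ = c := by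
  have hp1 : (1 : ℚ) < p := by exact_mod_cast hp.one_lt
  have h0 : (0 : ℚ) < 1 / p := by positivity
  have h1 : (1 : ℚ) / p < 1 := by
    rw [div_lt_one (by positivity)]; exact hp1
  have hz : ⌈-((1 : ℚ) / p)⌉ = 0 := by
    rw [Int.ceil_eq_zero_iff]
    simp only [Set.mem_Ioc, one_div] at *
    constructor <;> linarith
  rw [sub_eq_add_neg, add_comm, Int.ceil_add_intCast, hz, zero_add]

lemma chi_sub (p : ℕ) (hp : p.Prime) (c : ℤ) :
    chi (((c : ℚ)) - 1 / p) = ((c : ℚ)) ^ 2 - c / p := by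
  rw [chi, ceil_sub p hp c]
  have hpQ : (p : ℚ) ≠ 0 := by exact_mod_cast hp.pos.ne'
  field_simp

lemma key (p : ℕ) (hp : p.Prime) :
    ∀ m : ℕ, ∀ u : ℤ, ((u : ZMod p) = (-1) ^ (m + 1)) →
      ordEq (((1 + (p : ℤ) ^ m * u : ℤ) : ℚ) - 1 / p) (m + 1) := by
  have hpQ : (p : ℚ) ≠ 0 := by exact_mod_cast hp.pos.ne'
  intro m
  induction m with
  | zero =>
    intro u hu
    have hdvd : (p : ℤ) ∣ (1 + 1 * u) := by
      have : ((1 + 1 * u : ℤ) : ZMod p) = 0 := by push_cast [hu]; ring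
      exact_mod_cast (ZMod.intCast_zmod_eq_zero_iff_dvd _ _).mp this
    obtain ⟨k, hk⟩ := hdvd
    constructor
    · rw [Function.iterate_one, chi_sub p hp]
      have : (((1 + (p:ℤ)^0 * u : ℤ) : ℚ)) ^ 2 - ((1 + (p:ℤ)^0 * u : ℤ) : ℚ) / p
          = (((p * k) ^ 2 - k : ℤ) : ℚ) := by
        push_cast [pow_zero] at hk ⊢
        rw [show ((1:ℚ) + 1 * u) = p * k by exact_mod_cast congrArg (Int.cast : ℤ → ℚ) hk]
        field_simp
      rw [this]
      exact Rat.den_intCast _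
    · intro j hj
      interval_cases j
      simp only [Function.iterate_zero, id]
      rw [den_sub p hp]
      exact Nat.Prime.ne_one hp
  | succ m ih =>
    intro u hu
    set c : ℤ := 1 + (p : ℤ) ^ (m + 1) * u with hc
    set u' : ℤ := u * ((p : ℤ) * (c + 1) - 1) with hu'def
    have hu'mod : ((u' : ZMod p)) = (-1) ^ (m + 1) := by
      have hpz : ((p : ℤ) : ZMod p) = 0 := by
        simpa using (ZMod.natCast_self p)
      push_cast [hu'def, hpz, hu]
      ring
    have hstep : chi (((c : ℤ) : ℚ) - 1 / p)
        = (((1 + (p : ℤ) ^ m * u' : ℤ) : ℚ)) - 1 / p := by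
      rw [chi_sub p hp]
      push_cast [hc, hu'def]
      field_simp
      ring
    obtain ⟨h1, h2⟩ := ih u' hu'mod
    constructor
    · rw [Function.iterate_succ_apply, hstep]
      exact h1
    · intro j hj
      match j with
      | 0 =>
        simp only [Function.iterate_zero, id]
        rw [den_sub p hp]
        exact hp.ne_one
      | Nat.succ k =>
        rw [Function.iterate_succ_apply, hstep]
        exact h2 k (by omega)

theorem ord_example_two (p : ℕ) (hp : p.Prime) (hodd : Odd p) (n : ℕ) :
    ordEq (((-1 : ℚ) ^ n * (p : ℚ) ^ n + (p : ℚ) - 1) / p) n := by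
  have hpQ : (p : ℚ) ≠ 0 := by exact_mod_cast hp.pos.ne'
  match n with
  | 0 =>
    have hx : ((-1 : ℚ) ^ 0 * (p : ℚ) ^ 0 + (p : ℚ) - 1) / p = 1 := by
      field_simp
      ring
    rw [hx]
    exact ⟨by norm_num [chi], fun j hj => absurd hj (by omega)⟩
  | Nat.succ m =>
    have hx : ((-1 : ℚ) ^ (m + 1) * (p : ℚ) ^ (m + 1) + (p : ℚ) - 1) / p
        = (((1 + (p : ℤ) ^ m * (-1) ^ (m + 1) : ℤ) : ℚ)) - 1 / p := by
      push_cast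
      field_simp
      ring
    rw [hx]
    exact key p hp m ((-1) ^ (m + 1)) (by push_cast; ring)
end

section
/- For a prime p and n ≥ 1, A(n, p) = (p-1)^n; i.e., the set of integers a coprime to p with ord(a/p) = n is a disjoint union of exactly (p-1)^n congruence classes modulo p^{n+1}. -/
/-- `A n M`: the number of congruence classes modulo `M^(n+1)` of integers `a`
coprime to `M` with `ord (a/M) = n` (counted via representatives in `[0, M^(n+1))`). -/
noncomputable def A (n M : ℕ) : ℕ :=
  Nat.card {a : ℕ // a < M ^ (n + 1) ∧ Nat.Coprime a M ∧ ordEq ((a : ℚ) / M) n}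


section basics
variable {p : ℕ}

lemma den_div_eq_one_iff (a : ℤ) (hp : p.Prime) :
    ((a : ℚ) / (p : ℚ)).den = 1 ↔ (p : ℤ) ∣ a := by
  have hp0 : (p : ℚ) ≠ 0 := by exact_mod_cast hp.ne_zero
  constructor
  · intro h
    have h2 : ((((a : ℚ)/p).num : ℤ) : ℚ) = (a : ℚ)/p := (Rat.den_eq_one_iff _).mp h
    refine ⟨((a : ℚ)/p).num, ?_⟩
    have : (a : ℚ) = (p : ℚ) * (((a : ℚ)/p).num : ℚ) := by
      rw [h2]; field_simp
    exact_mod_cast this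
  · rintro ⟨k, rfl⟩
    have : ((p * k : ℤ) : ℚ) / p = (k : ℚ) := by push_cast; field_simp
    rw [this]; exact Rat.den_intCast k

lemma ceil_div_eq (a : ℤ) (hp : p.Prime) (ha : ¬ (p : ℤ) ∣ a) :
    ⌈(a : ℚ) / (p : ℚ)⌉ = a / (p : ℤ) + 1 := by
  have hfl : ⌊(a : ℚ) / (p : ℚ)⌋ = a / (p : ℤ) := Rat.floor_intCast_div_natCast a p
  have hne : ((a / (p : ℤ) : ℤ) : ℚ) ≠ (a : ℚ) / p := by
    intro h
    apply ha
    exact (den_div_eq_one_iff a hp).mp (by rw [← h]; exact Rat.den_intCast _)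
  have hlt : ((a / (p : ℤ) : ℤ) : ℚ) < (a : ℚ) / p :=
    lt_of_le_of_ne (hfl ▸ Int.floor_le ((a : ℚ)/p)) hne
  have h2 : a / (p : ℤ) < ⌈(a : ℚ) / p⌉ := Int.lt_ceil.mpr hlt
  have h1 : ⌈(a : ℚ) / p⌉ ≤ ⌊(a : ℚ) / p⌋ + 1 := Int.ceil_le_floor_add_one _
  omega

lemma chi_div (a : ℤ) (hp : p.Prime) (ha : ¬ (p : ℤ) ∣ a) :
    chi ((a : ℚ) / p) = ((a * (a / (p : ℤ) + 1) : ℤ) : ℚ) / p := by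
  have hp0 : (p : ℚ) ≠ 0 := by exact_mod_cast hp.ne_zero
  rw [chi, ceil_div_eq a hp ha]
  push_cast
  ring

end basics

lemma ordEq_zero_iff (x : ℚ) : ordEq x 0 ↔ x.den = 1 := by
  simp [ordEq]

lemma ordEq_succ_iff (x : ℚ) (n : ℕ) :
    ordEq x (n + 1) ↔ x.den ≠ 1 ∧ ordEq (chi x) n := by
  constructor
  · rintro ⟨h1, h2⟩
    refine ⟨h2 0 (by omega), ?_, ?_⟩
    · rw [← Function.iterate_succ_apply]; exact h1
    · intro j hj
      rw [← Function.iterate_succ_apply]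
      exact h2 (j + 1) (by omega)
  · rintro ⟨h0, h1, h2⟩
    refine ⟨by rw [Function.iterate_succ_apply]; exact h1, ?_⟩
    intro j hj
    cases j with
    | zero => exact h0
    | succ k =>
      rw [Function.iterate_succ_apply]
      exact h2 k (by omega)

section main
variable {p : ℕ}

/-- The integer-level step map. -/
def T (p : ℕ) (a : ℤ) : ℤ := a * (a / (p : ℤ) + 1)

lemma ordEq_step (a : ℤ) (hp : p.Prime) (ha : ¬ (p : ℤ) ∣ a) (n : ℕ) :
    ordEq ((a : ℚ) / p) (n + 1) ↔ ordEq ((T p a : ℚ) / p) n := by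
  rw [ordEq_succ_iff, chi_div a hp ha]
  simp [den_div_eq_one_iff a hp, ha, T]

lemma T_modeq (hp0 : (p : ℤ) ≠ 0) (k : ℕ) {a b : ℤ}
    (h : a ≡ b [ZMOD (p : ℤ) ^ (k + 1)]) : T p a ≡ T p b [ZMOD (p : ℤ) ^ k] := by
  obtain ⟨t, ht⟩ := Int.ModEq.dvd h
  have hab : a = b + ((p : ℤ) ^ k * (-t)) * p := by
    have : b - a = (p : ℤ)^(k+1) * t := ht
    ring_nf
    ring_nf at this
    linarith [this]
  have hdiv : a / (p : ℤ) = b / (p : ℤ) + (p : ℤ) ^ k * (-t) := by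
    rw [hab, Int.add_mul_ediv_right _ _ hp0]
  have h1 : a ≡ b [ZMOD (p : ℤ) ^ k] := h.of_dvd (pow_dvd_pow _ (by omega))
  have h2 : a / (p : ℤ) + 1 ≡ b / (p : ℤ) + 1 [ZMOD (p : ℤ) ^ k] := by
    rw [hdiv]
    exact (Int.modEq_iff_dvd.mpr ⟨t, by ring⟩).add_right 1
  exact h1.mul h2

lemma dvd_iff_of_modeq {a b : ℤ} (h : a ≡ b [ZMOD (p : ℤ)]) :
    (p : ℤ) ∣ a ↔ (p : ℤ) ∣ b := by
  constructor
  · intro hd; exact (Int.modEq_zero_iff_dvd).mp ((h.symm).trans ((Int.modEq_zero_iff_dvd).mpr hd))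
  · intro hd; exact (Int.modEq_zero_iff_dvd).mp (h.trans ((Int.modEq_zero_iff_dvd).mpr hd))

lemma ordEq_congr (hp : p.Prime) :
    ∀ (n : ℕ) (a b : ℤ), a ≡ b [ZMOD (p : ℤ) ^ (n + 1)] →
      (ordEq ((a : ℚ) / p) n ↔ ordEq ((b : ℚ) / p) n) := by
  intro n
  induction n with
  | zero =>
    intro a b h
    rw [ordEq_zero_iff, ordEq_zero_iff, den_div_eq_one_iff a hp, den_div_eq_one_iff b hp]
    exact dvd_iff_of_modeq (by simpa using h)
  | succ n ih =>
    intro a b h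
    have hp0 : (p : ℤ) ≠ 0 := by exact_mod_cast hp.ne_zero
    have hmodp : a ≡ b [ZMOD (p : ℤ)] := h.of_dvd (dvd_pow_self _ (by omega))
    have hpab : (p : ℤ) ∣ a ↔ (p : ℤ) ∣ b := dvd_iff_of_modeq hmodp
    by_cases hpa : (p : ℤ) ∣ a
    · have hpb : (p : ℤ) ∣ b := hpab.mp hpa
      constructor <;> intro hord <;> exfalso
      · exact (ordEq_succ_iff _ _).mp hord |>.1 ((den_div_eq_one_iff a hp).mpr hpa)
      · exact (ordEq_succ_iff _ _).mp hord |>.1 ((den_div_eq_one_iff b hp).mpr hpb)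
    · have hpb : ¬ (p : ℤ) ∣ b := fun hc => hpa (hpab.mpr hc)
      rw [ordEq_step a hp hpa n, ordEq_step b hp hpb n]
      exact ih (T p a) (T p b) (T_modeq hp0 (n + 1) h)

lemma inj_step (hp : p.Prime) (n : ℕ) {r s₁ s₂ : ℤ} (hr : ¬ (p : ℤ) ∣ r)
    (h : (p : ℤ) ^ n ∣ ((r + p * s₁) * (s₁ + 1) - (r + p * s₂) * (s₂ + 1))) :
    (p : ℤ) ^ n ∣ (s₁ - s₂) := by
  have key : (r + p * s₁) * (s₁ + 1) - (r + p * s₂) * (s₂ + 1)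
      = (s₁ - s₂) * ((p : ℤ) * (s₁ + s₂) + p + r) := by ring
  rw [key] at h
  have hu : ¬ (p : ℤ) ∣ ((p : ℤ) * (s₁ + s₂) + p + r) := by
    intro hd
    apply hr
    have h2 : (p : ℤ) ∣ (p : ℤ) * (s₁ + s₂) + p := ⟨s₁ + s₂ + 1, by ring⟩
    have h3 := dvd_sub hd h2
    have h4 : (p : ℤ) * (s₁ + s₂) + p + r - ((p : ℤ) * (s₁ + s₂) + p) = r := by ring
    rwa [h4] at h3
  exact (Nat.prime_iff_prime_int.mp hp).pow_dvd_of_dvd_mul_right n hu h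

end main

section counting
variable {p : ℕ}

/-- ℕ-level step map. -/
def Tn (p a : ℕ) : ℕ := a * (a / p + 1)

lemma cast_Tn (p a : ℕ) : ((Tn p a : ℕ) : ℤ) = T p (a : ℤ) := by
  simp only [Tn, T]
  push_cast [Int.natCast_ediv]
  ring

/-- The set of non-multiples of `p` below `p^(n+1)`. -/
def S (p n : ℕ) : Finset ℕ := (Finset.range (p ^ (n + 1))).filter (fun a => ¬ p ∣ a)

lemma mem_S {n a : ℕ} : a ∈ S p n ↔ a < p ^ (n + 1) ∧ ¬ p ∣ a := by
  simp [S]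

lemma card_S (hp : p.Prime) (n : ℕ) : (S p n).card = p ^ (n + 1) - p ^ n := by
  have hp0 : 0 < p := hp.pos
  have hmul : (Finset.range (p ^ (n + 1))).filter (fun a => p ∣ a)
      = (Finset.range (p ^ n)).image (fun k => p * k) := by
    ext m
    simp only [Finset.mem_filter, Finset.mem_range, Finset.mem_image]
    constructor
    · rintro ⟨hm, k, rfl⟩
      refine ⟨k, ?_, rfl⟩
      by_contra hk
      push_neg at hk
      have h1 : p * p ^ n ≤ p * k := Nat.mul_le_mul_left p hk
      rw [pow_succ] at hm
      have h2 : p ^ n * p = p * p ^ n := Nat.mul_comm _ _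
      omega
    · rintro ⟨k, hk, rfl⟩
      refine ⟨?_, ⟨k, rfl⟩⟩
      rw [pow_succ]
      calc p * k < p * p ^ n := by exact (Nat.mul_lt_mul_left hp0).mpr hk
        _ = p ^ n * p := Nat.mul_comm _ _
  have hcard : ((Finset.range (p ^ (n + 1))).filter (fun a => p ∣ a)).card = p ^ n := by
    rw [hmul, Finset.card_image_of_injective _ (fun a b h => by
      exact Nat.eq_of_mul_eq_mul_left hp0 h), Finset.card_range]
  have := Finset.card_filter_add_card_filter_not
    (s := Finset.range (p ^ (n + 1))) (p := fun a => p ∣ a)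
  rw [Finset.card_range] at this
  unfold S
  omega

end counting

section counting2
variable {p : ℕ}

/-- The repackaging map. -/
def G (p n a : ℕ) : ℕ := a % p + p * (Tn p a % p ^ n)

lemma G_mod (hp : p.Prime) (n a : ℕ) : G p n a % p = a % p := by
  rw [G, Nat.add_mul_mod_self_left, Nat.mod_mod_of_dvd _ (dvd_refl p)]

lemma G_div (hp : p.Prime) (n a : ℕ) : G p n a / p = Tn p a % p ^ n := by
  rw [G, Nat.add_mul_div_left _ _ hp.pos, Nat.div_eq_of_lt (Nat.mod_lt _ hp.pos), Nat.zero_add]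

lemma G_mem_S (hp : p.Prime) (n : ℕ) {a : ℕ} (ha : a ∈ S p n) : G p n a ∈ S p n := by
  rw [mem_S] at ha ⊢
  constructor
  · have h1 : a % p < p := Nat.mod_lt _ hp.pos
    have h2 : Tn p a % p ^ n < p ^ n := Nat.mod_lt _ (pow_pos hp.pos n)
    calc G p n a = a % p + p * (Tn p a % p ^ n) := rfl
      _ < p + p * (p ^ n - 1) := by
          have := Nat.mul_le_mul_left p (Nat.le_sub_one_of_lt h2)
          omega
      _ ≤ p ^ (n + 1) := by
          have hpn : 1 ≤ p ^ n := Nat.one_le_pow _ _ hp.pos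
          rw [pow_succ, Nat.mul_sub, Nat.mul_one, Nat.mul_comm]
          have : p ≤ p ^ n * p := Nat.le_mul_of_pos_left p hpn
          omega
  · intro hdvd
    apply ha.2
    have h0 : G p n a % p = 0 := Nat.dvd_iff_mod_eq_zero.mp hdvd
    rw [G_mod hp] at h0
    exact Nat.dvd_iff_mod_eq_zero.mpr h0

end counting2

section counting3
variable {p : ℕ}

lemma T_form (p a : ℕ) : T p (a : ℤ) = (((a % p : ℕ) : ℤ) + (p : ℤ) * ((a / p : ℕ) : ℤ)) * (((a / p : ℕ) : ℤ) + 1) := by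
  have h1 : (a : ℤ) = ((a % p : ℕ) : ℤ) + (p : ℤ) * ((a / p : ℕ) : ℤ) := by
    exact_mod_cast (Nat.mod_add_div a p).symm
  have h2 : (a : ℤ) / (p : ℤ) = ((a / p : ℕ) : ℤ) := (Int.natCast_ediv _ _).symm
  rw [T, h2, ← h1]

lemma not_dvd_cast_mod (hp : p.Prime) {a : ℕ} (ha : ¬ p ∣ a) : ¬ (p : ℤ) ∣ ((a % p : ℕ) : ℤ) := by
  intro h
  have h1 : p ∣ a % p := Int.natCast_dvd_natCast.mp h
  have h2 : a % p ≠ 0 := fun h0 => ha (Nat.dvd_iff_mod_eq_zero.mpr h0)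
  have h3 : a % p < p := Nat.mod_lt _ hp.pos
  have := Nat.le_of_dvd (Nat.pos_of_ne_zero h2) h1
  omega

lemma G_injOn (hp : p.Prime) (n : ℕ) :
    ∀ a₁ ∈ S p n, ∀ a₂ ∈ S p n, G p n a₁ = G p n a₂ → a₁ = a₂ := by
  intro a₁ h₁ a₂ h₂ heq
  rw [mem_S] at h₁ h₂
  have hr : a₁ % p = a₂ % p := by rw [← G_mod hp n a₁, ← G_mod hp n a₂, heq]
  have ht : Tn p a₁ % p ^ n = Tn p a₂ % p ^ n := by
    rw [← G_div hp n a₁, ← G_div hp n a₂, heq]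
  have hdiv : ∀ a : ℕ, a < p ^ (n + 1) → a / p < p ^ n := by
    intro a ha
    rw [Nat.div_lt_iff_lt_mul hp.pos, ← pow_succ]
    exact ha
  have hs₁ : a₁ / p < p ^ n := hdiv a₁ h₁.1
  have hs₂ : a₂ / p < p ^ n := hdiv a₂ h₂.1
  have hd : (p : ℤ) ^ n ∣ (T p (a₁ : ℤ) - T p (a₂ : ℤ)) := by
    have hmodeq : Tn p a₁ ≡ Tn p a₂ [MOD p ^ n] := ht
    have h5 := (Nat.modEq_iff_dvd).mp hmodeq
    have hc : ((p ^ n : ℕ) : ℤ) = (p : ℤ) ^ n := by push_cast; ring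
    rw [← cast_Tn, ← cast_Tn, ← hc, ← neg_sub]
    exact dvd_neg.mpr h5
  rw [T_form, T_form, hr] at hd
  have hds : (p : ℤ) ^ n ∣ ((a₁ / p : ℕ) : ℤ) - ((a₂ / p : ℕ) : ℤ) :=
    inj_step hp n (not_dvd_cast_mod hp h₂.2) hd
  have habs : |((a₁ / p : ℕ) : ℤ) - ((a₂ / p : ℕ) : ℤ)| < (p : ℤ) ^ n := by
    have hle1 : (0 : ℤ) ≤ ((a₁ / p : ℕ) : ℤ) := Int.natCast_nonneg _
    have hle2 : (0 : ℤ) ≤ ((a₂ / p : ℕ) : ℤ) := Int.natCast_nonneg _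
    have hlt1 : ((a₁ / p : ℕ) : ℤ) < (p : ℤ) ^ n := by exact_mod_cast hs₁
    have hlt2 : ((a₂ / p : ℕ) : ℤ) < (p : ℤ) ^ n := by exact_mod_cast hs₂
    rw [abs_lt]
    constructor <;> omega
  have hzero := Int.eq_zero_of_abs_lt_dvd hds habs
  have hsdiv : a₁ / p = a₂ / p := by omega
  calc a₁ = a₁ % p + p * (a₁ / p) := (Nat.mod_add_div a₁ p).symm
    _ = a₂ % p + p * (a₂ / p) := by rw [hr, hsdiv]
    _ = a₂ := Nat.mod_add_div a₂ p

lemma G_image (hp : p.Prime) (n : ℕ) : (S p n).image (G p n) = S p n := by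
  apply Finset.eq_of_subset_of_card_le
  · intro c hc
    obtain ⟨a, ha, rfl⟩ := Finset.mem_image.mp hc
    exact G_mem_S hp n ha
  · rw [Finset.card_image_of_injOn (fun a₁ h₁ a₂ h₂ h =>
      G_injOn hp n a₁ (Finset.mem_coe.mp h₁) a₂ (Finset.mem_coe.mp h₂) h)]

lemma fiber_count (hp : p.Prime) (n b : ℕ) :
    ((S p n).filter (fun a => Tn p a % p ^ n = b % p ^ n)).card = p - 1 := by
  have hstep1 : ((S p n).filter (fun a => Tn p a % p ^ n = b % p ^ n)).card
      = ((S p n).filter (fun c => c / p = b % p ^ n)).card := by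
    apply Finset.card_bij (fun a _ => G p n a)
    · intro a ha
      rw [Finset.mem_filter] at ha ⊢
      exact ⟨G_mem_S hp n ha.1, by rw [G_div hp]; exact ha.2⟩
    · intro a₁ h₁ a₂ h₂ h
      exact G_injOn hp n a₁ (Finset.mem_filter.mp h₁).1 a₂ (Finset.mem_filter.mp h₂).1 h
    · intro c hc
      rw [Finset.mem_filter] at hc
      have : c ∈ (S p n).image (G p n) := by rw [G_image hp n]; exact hc.1
      obtain ⟨a, ha, rfl⟩ := Finset.mem_image.mp this
      refine ⟨a, ?_, rfl⟩
      rw [Finset.mem_filter]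
      refine ⟨ha, ?_⟩
      rw [← G_div hp n a]
      exact hc.2
  rw [hstep1]
  have hU : (S p n).filter (fun c => c / p = b % p ^ n)
      = (Finset.Ico 1 p).image (fun r => r + p * (b % p ^ n)) := by
    ext c
    rw [Finset.mem_filter, mem_S, Finset.mem_image]
    constructor
    · rintro ⟨⟨hlt, hnd⟩, hdiv⟩
      refine ⟨c % p, ?_, ?_⟩
      · rw [Finset.mem_Ico]
        have h3 : c % p < p := Nat.mod_lt _ hp.pos
        have h2 : c % p ≠ 0 := fun h0 => hnd (Nat.dvd_iff_mod_eq_zero.mpr h0)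
        omega
      · rw [← hdiv]
        exact Nat.mod_add_div c p
    · rintro ⟨r, hr, rfl⟩
      rw [Finset.mem_Ico] at hr
      have hb : b % p ^ n < p ^ n := Nat.mod_lt _ (pow_pos hp.pos n)
      have hmod : (r + p * (b % p ^ n)) % p = r := by
        rw [Nat.add_mul_mod_self_left, Nat.mod_eq_of_lt hr.2]
      refine ⟨⟨?_, ?_⟩, ?_⟩
      · have h1 : p * (b % p ^ n) ≤ p * (p ^ n - 1) := Nat.mul_le_mul_left p (by omega)
        have h2 : p * (p ^ n - 1) = p * p ^ n - p := by rw [Nat.mul_sub, Nat.mul_one]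
        have h3 : p ≤ p * p ^ n := Nat.le_mul_of_pos_right p (pow_pos hp.pos n)
        have h4 : p ^ (n + 1) = p * p ^ n := by rw [pow_succ, Nat.mul_comm]
        omega
      · intro hd
        have h0 := Nat.dvd_iff_mod_eq_zero.mp hd
        rw [hmod] at h0
        omega
      · rw [Nat.add_mul_div_left _ _ hp.pos, Nat.div_eq_of_lt hr.2, Nat.zero_add]
  rw [hU, Finset.card_image_of_injective _ (fun x y h => by omega), Nat.card_Ico]

end counting3

section final
variable {p : ℕ}

lemma cast_nat_rat (a : ℕ) : ((a : ℕ) : ℚ) = (((a : ℤ)) : ℚ) := by push_cast; rfl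

open Classical in
/-- The main counting finset. -/
noncomputable def F (p n : ℕ) : Finset ℕ :=
  (Finset.range (p ^ (n + 1))).filter (fun a => ¬ p ∣ a ∧ ordEq ((a : ℚ) / p) n)

lemma mem_F {n a : ℕ} :
    a ∈ F p n ↔ a < p ^ (n + 1) ∧ ¬ p ∣ a ∧ ordEq ((a : ℚ) / p) n := by
  classical
  simp [F]

lemma ordEq_succ_nat (hp : p.Prime) {a : ℕ} (ha : ¬ p ∣ a) (n : ℕ) :
    ordEq ((a : ℚ) / p) (n + 1) ↔ ordEq (((Tn p a % p ^ (n + 1) : ℕ) : ℚ) / p) n := by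
  have haz : ¬ (p : ℤ) ∣ (a : ℤ) := fun h => ha (Int.natCast_dvd_natCast.mp h)
  rw [cast_nat_rat a, ordEq_step (a : ℤ) hp haz n, cast_nat_rat (Tn p a % p ^ (n + 1))]
  apply ordEq_congr hp n
  rw [Int.natCast_mod, cast_Tn]
  push_cast
  show _ % _ = _ % _
  rw [Int.emod_emod_of_dvd _ dvd_rfl]

lemma card_F_one (hp : p.Prime) : (F p 1).card = p - 1 := by
  have hF : F p 1 = (S p 1).filter (fun a => Tn p a % p ^ 1 = 0 % p ^ 1) := by
    ext a
    rw [mem_F, Finset.mem_filter, mem_S]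
    constructor
    · rintro ⟨h1, h2, h3⟩
      refine ⟨⟨h1, h2⟩, ?_⟩
      have haz : ¬ (p : ℤ) ∣ (a : ℤ) := fun h => h2 (Int.natCast_dvd_natCast.mp h)
      rw [cast_nat_rat a, ordEq_step (a : ℤ) hp haz 0, ordEq_zero_iff,
        den_div_eq_one_iff _ hp, ← cast_Tn] at h3
      have : p ∣ Tn p a := Int.natCast_dvd_natCast.mp h3
      simp [Nat.dvd_iff_mod_eq_zero.mp this]
    · rintro ⟨⟨h1, h2⟩, h3⟩
      refine ⟨h1, h2, ?_⟩
      have haz : ¬ (p : ℤ) ∣ (a : ℤ) := fun h => h2 (Int.natCast_dvd_natCast.mp h)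
      rw [cast_nat_rat a, ordEq_step (a : ℤ) hp haz 0, ordEq_zero_iff,
        den_div_eq_one_iff _ hp, ← cast_Tn]
      have hd : p ∣ Tn p a := by
        rw [pow_one] at h3
        simp at h3
        exact Nat.dvd_iff_mod_eq_zero.mpr h3
      exact_mod_cast Int.natCast_dvd_natCast.mpr hd
  rw [hF, fiber_count hp 1 0]

lemma card_F_succ (hp : p.Prime) (n : ℕ) (hn : 1 ≤ n) :
    (F p (n + 1)).card = (p - 1) * (F p n).card := by
  classical
  have hmap : ∀ a ∈ F p (n + 1), Tn p a % p ^ (n + 1) ∈ F p n := by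
    intro a ha
    rw [mem_F] at ha
    obtain ⟨h1, h2, h3⟩ := ha
    rw [ordEq_succ_nat hp h2 n] at h3
    rw [mem_F]
    refine ⟨Nat.mod_lt _ (pow_pos hp.pos _), ?_, h3⟩
    intro hd
    have hden := h3.2 0 hn
    simp only [Function.iterate_zero, id_eq] at hden
    apply hden
    rw [cast_nat_rat, den_div_eq_one_iff _ hp]
    exact_mod_cast Int.natCast_dvd_natCast.mpr hd
  rw [Finset.card_eq_sum_card_fiberwise hmap]
  have hfib : ∀ b ∈ F p n,
      ((F p (n + 1)).filter (fun a => Tn p a % p ^ (n + 1) = b)).card = p - 1 := by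
    intro b hb
    rw [mem_F] at hb
    have hbmod : b % p ^ (n + 1) = b := Nat.mod_eq_of_lt hb.1
    have hset : (F p (n + 1)).filter (fun a => Tn p a % p ^ (n + 1) = b)
        = (S p (n + 1)).filter (fun a => Tn p a % p ^ (n + 1) = b % p ^ (n + 1)) := by
      ext a
      rw [Finset.mem_filter, Finset.mem_filter, mem_F, mem_S, hbmod]
      constructor
      · rintro ⟨⟨h1, h2, _⟩, h4⟩
        exact ⟨⟨h1, h2⟩, h4⟩
      · rintro ⟨⟨h1, h2⟩, h4⟩
        refine ⟨⟨h1, h2, ?_⟩, h4⟩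
        rw [ordEq_succ_nat hp h2 n, h4]
        exact hb.2.2
    rw [hset, fiber_count hp (n + 1) b]
  rw [Finset.sum_congr rfl hfib, Finset.sum_const, smul_eq_mul, Nat.mul_comm]

lemma card_F_eq (hp : p.Prime) (n : ℕ) (hn : 1 ≤ n) : (F p n).card = (p - 1) ^ n := by
  induction n, hn using Nat.le_induction with
  | base => rw [card_F_one hp, pow_one]
  | succ n hn ih => rw [card_F_succ hp n hn, ih, pow_succ, Nat.mul_comm]

end final

theorem A_prime (p : ℕ) (hp : p.Prime) (n : ℕ) (hn : 1 ≤ n) :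
    A n p = (p - 1) ^ n := by
  have hiff : ∀ a : ℕ,
      (a < p ^ (n + 1) ∧ Nat.Coprime a p ∧ ordEq ((a : ℚ) / p) n) ↔ a ∈ F p n := by
    intro a
    rw [mem_F]
    have hcop : Nat.Coprime a p ↔ ¬ p ∣ a := by
      rw [Nat.coprime_comm]
      exact hp.coprime_iff_not_dvd
    tauto
  rw [A, Nat.card_congr (Equiv.subtypeEquivRight hiff), Nat.card_eq_finsetCard,
    card_F_eq hp n hn]
end
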